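/- Obstruction to right a-multiplication: let s = s(g,a) be a souped-up Lie algebra containing elements a ∈ a and g ∈ g with [g,[g,a]] = 1 (where [g,·] denotes the derivation action of g on a and 1 is the unit of a). Then for any choice of locality function N, the ideal J of F(s) generated by the souped-up vertex algebra ideal I(s) together with the single element g ∘₋₁ a − a·g contains the element 1; consequently J = F(s) and the quotient F(s)/J is zero. (Such elements exist, e.g. g = d/db and a = b²/2 in the souped-up Lie algebra of vector fields and differentiable functions on the real line.) -/

import Mathlib

noncomputable section

/-!
Common framework: "infinite free algebras" in the sense of Eller, *Chiral vector bundles*.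

An infinite free algebra (completed) is modelled as a topological vector space `F`
over a field `k` of characteristic zero, with a distinguished vector `one` and a
`ℤ`-indexed family of bilinear products `circ n`.  The formal infinite sums provided
by the completion are interpreted by `tsum` (`∑'`).  An ideal is a subspace closed
under all the products (on both sides) and under convergent (formal) infinite sums.
-/

/-- An infinite free algebra (completed). -/
structure IFA (k F : Type) [Field k] [CharZero k] [AddCommGroup F] [Module k F]
    [TopologicalSpace F] where
  /-- the distinguished vector `1` -/
  one : F
  /-- the products `∘ₙ`; `circ n x y` is `x ∘ₙ y` -/
  circ : ℤ → F → F → F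
  circ_add_left : ∀ (n : ℤ) (x x' y : F), circ n (x + x') y = circ n x y + circ n x' y
  circ_add_right : ∀ (n : ℤ) (x y y' : F), circ n x (y + y') = circ n x y + circ n x y'
  circ_smul_left : ∀ (n : ℤ) (c : k) (x y : F), circ n (c • x) y = c • circ n x y
  circ_smul_right : ∀ (n : ℤ) (c : k) (x y : F), circ n x (c • y) = c • circ n x y

namespace IFA

/-- The binomial coefficient `C(m, K)` for `m : ℤ`, `K : ℕ`, as an element of `k`. -/
def zbinom (k : Type) [Field k] [CharZero k] (m : ℤ) (K : ℕ) : k :=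
  (∏ i ∈ Finset.range K, ((m : k) - (i : k))) / (K.factorial : k)

variable {k F : Type} [Field k] [CharZero k] [AddCommGroup F] [Module k F]
  [TopologicalSpace F] (A : IFA k F)

/-- `D x := x ∘₋₂ 1`. -/
def D (x : F) : F := A.circ (-2) x A.one

/-- identity generators `i⟦x;n⟧ := 1ₙx − δ_{n,−1}x` -/
def geni (x : F) (n : ℤ) : F := A.circ n A.one x - (if n = -1 then x else 0)

/-- derivation generators `d⟦x,y;n⟧ := D(xₙy) − (Dx)ₙy − xₙ(Dy)` -/
def gend (x y : F) (n : ℤ) : F :=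
  A.D (A.circ n x y) - A.circ n (A.D x) y - A.circ n x (A.D y)

/-- shift generators `e⟦x,y;n⟧ := (Dx)ₙy + n·x_{n−1}y` -/
def gene (x y : F) (n : ℤ) : F := A.circ n (A.D x) y + (n : k) • A.circ (n - 1) x y

/-- quasi-commutativity generators
`qc⟦x,y;n⟧ := xₙy + Σ_{K≥0}((−1)^{n+K}/K!)·D^K(y_{n+K}x)` -/
def genqc (x y : F) (n : ℤ) : F :=
  A.circ n x y +
    ∑' K : ℕ, (((-1 : k) ^ (n + (K : ℤ))) * ((K.factorial : k)⁻¹)) •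
      (A.D)^[K] (A.circ (n + (K : ℤ)) y x)

/-- quasi-associativity generators
`qa⟦x,y,z;m,n⟧ := (x_my)_nz − Σ_{K≥0} C(m,K)(−1)^K (x_{m−K}(y_{n+K}z) − (−1)^m y_{m+n−K}(x_Kz))` -/
def genqa (x y z : F) (m n : ℤ) : F :=
  A.circ n (A.circ m x y) z -
    ∑' K : ℕ, ((zbinom k m K) * ((-1 : k) ^ K)) •
      (A.circ (m - (K : ℤ)) x (A.circ (n + (K : ℤ)) y z)
        - ((-1 : k) ^ m) • A.circ (m + n - (K : ℤ)) y (A.circ (K : ℤ) x z))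

/-- An ideal of the (completed) infinite free algebra: a subspace closed under all the
products `∘ₙ` by arbitrary elements on both sides, and under the formal (convergent)
infinite sums provided by the completion. -/
def IsIdeal (J : Submodule k F) : Prop :=
  (∀ (n : ℤ) (x y : F), y ∈ J → A.circ n x y ∈ J ∧ A.circ n y x ∈ J) ∧
    (∀ f : ℕ → F, (∀ i, f i ∈ J) → Summable f → (∑' i, f i) ∈ J)

/-- The ideal generated by a set `S ⊆ F`. -/
def idealGenBy (S : Set F) : Submodule k F := sInf {J | A.IsIdeal J ∧ S ⊆ J}

/-- The generators of the vertex algebra ideal other than the locality generators: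
`i⟦x;n⟧, d⟦x,y;n⟧, qc⟦x,y;n⟧` for `n = −1` and all `n ≥ 0`; `qa⟦x,y,z;m,n⟧` for
`m, n ∈ {−1,0,1,2,…}`; and `e⟦x,y;n⟧` for all `n ∈ ℤ`. -/
def baseGens : Set F :=
  {w | ∃ (x : F) (n : ℤ), -1 ≤ n ∧ w = A.geni x n} ∪
  {w | ∃ (x y : F) (n : ℤ), -1 ≤ n ∧ w = A.gend x y n} ∪
  {w | ∃ (x y : F) (n : ℤ), -1 ≤ n ∧ w = A.genqc x y n} ∪
  {w | ∃ (x y z : F) (m n : ℤ), -1 ≤ m ∧ -1 ≤ n ∧ w = A.genqa x y z m n} ∪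
  {w | ∃ (x y : F) (n : ℤ), w = A.gene x y n}

/-- The vertex algebra ideal `I` associated to the locality function `N : F × F → ℕ`:
the ideal generated by the base generators together with the locality elements
`xₙy` for all `x, y ∈ F` and `n ≥ N(x,y)`. -/
def vertexIdeal (N : F → F → ℕ) : Submodule k F :=
  A.idealGenBy
    (A.baseGens ∪ {w | ∃ (x y : F) (n : ℤ), (N x y : ℤ) ≤ n ∧ w = A.circ n x y})

end IFA
/-!
Concrete construction of the (completed) infinite free algebra `F(v)` generated by a
unital vector space `v`: product shapes are binary trees with integer-labelled internal
nodes; the span of the monomials of a fixed shape is the corresponding iterated tensor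
power of `v`; and the completion (allowing formal infinite sums of monomials of pairwise
distinct product shapes) is the direct product over all shapes.  Each shape component
carries the discrete topology and `F(v)` the product topology, so that a family is
summable exactly when every shape component receives only finitely many contributions.
-/

/-- Product shapes: full binary rooted trees with an integer at each internal node. -/
inductive Shape : Type
  | leaf : Shape
  | node : ℤ → Shape → Shape → Shape
  deriving DecidableEq

/-- A bundled `k`-vector space. -/
structure MC (k : Type) [Field k] where
  T : Type
  [grp : AddCommGroup T]
  [mod : Module k T]

attribute [instance] MC.grp MC.mod

variable (k : Type) [Field k] [CharZero k] (V : Type) [AddCommGroup V] [Module k V]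

/-- The space spanned by the monomials of a given product shape (bundled). -/
def monData : Shape → MC k
  | .leaf => MC.mk V
  | .node _ l r => MC.mk (TensorProduct k (monData l).T (monData r).T)

/-- The space spanned by the monomials of a given product shape. -/
abbrev MonSp (s : Shape) : Type := (monData k V s).T

instance (s : Shape) : TopologicalSpace (MonSp k V s) := ⊥

/-- The completed infinite free algebra `F(v)` on the (unital) vector space `v = V`. -/
abbrev FV : Type := ∀ s : Shape, MonSp k V s

/-- The embedding of the generating space `v` into `F(v)` (the length-1 component). -/
def ι (a : V) : FV k V := fun s =>
  match s with
  | .leaf => a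
  | .node _ _ _ => 0

/-- The product `x ∘ₙ y` on `F(v)`. -/
def op (n : ℤ) (x y : FV k V) : FV k V := fun s =>
  match s with
  | .leaf => 0
  | .node m l r => if n = m then TensorProduct.tmul k (x l) (y r) else 0

/-- `F(v)` as an infinite free algebra, with distinguished vector the image of the
distinguished vector `e ∈ v`. -/
def freeIFA (e : V) : IFA k (FV k V) where
  one := ι k V e
  circ := op k V
  circ_add_left := by
    intro n x x' y; funext s
    cases s with
    | leaf => simp [op]
    | node m l r =>
        by_cases h : n = m <;>
          simp [op, h, Pi.add_apply, TensorProduct.add_tmul] <;> rfl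
  circ_add_right := by
    intro n x y y'; funext s
    cases s with
    | leaf => simp [op]
    | node m l r =>
        by_cases h : n = m <;>
          simp [op, h, Pi.add_apply, TensorProduct.tmul_add] <;> rfl
  circ_smul_left := by
    intro n c x y; funext s
    cases s with
    | leaf => simp [op]
    | node m l r =>
        by_cases h : n = m
        · simp only [op, h, if_true, Pi.smul_apply]
          exact (TensorProduct.smul_tmul' c (x l) (y r)).symm
        · simp [op, h]
  circ_smul_right := by
    intro n c x y; funext s
    cases s with
    | leaf => simp [op]
    | node m l r =>
        by_cases h : n = m <;>
          simp [op, h, Pi.smul_apply, TensorProduct.tmul_smul] <;> rfl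

/-- The vertex algebra ideal `I(v)` of `F(v)`: generated by the base generators
together with the locality elements `uₙv` for `u, v ∈ v` (the generating space) and
`n ≥ N(u,v)`. -/
def genVertexIdeal (e : V) (N : V → V → ℕ) : Submodule k (FV k V) :=
  (freeIFA k V e).idealGenBy
    ((freeIFA k V e).baseGens ∪
      {w | ∃ (a b : V) (n : ℤ), (N a b : ℤ) ≤ n ∧ w = op k V n (ι k V a) (ι k V b)})
/-!
Souped-up Lie algebras `s = s(g, a)`: an associative commutative unital `k`-algebra `a`
and a `k`-Lie algebra `g` such that `g` is a left `a`-module, `a` is a `g`-module on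
which `g` acts by derivations, compatibly.  The underlying unital vector space of the
semidirect sum `s = g ⊕ a` is modelled as `L × A` with distinguished vector `(0, 1)`.
-/

/-- The action data making `(g, a) = (L, A)` a souped-up Lie algebra: `g` acts on `a`
by derivations, the action is a Lie algebra action, and it is compatible with the
`a`-module structure of `g` in that `[g, a·h] = [g,a]·h + a·[g,h]`. -/
structure SoupAct (k A L : Type) [Field k] [CharZero k] [CommRing A] [Algebra k A]
    [LieRing L] [LieAlgebra k L] [Module A L] [IsScalarTower k A L] where
  act : L →ₗ[k] A →ₗ[k] A
  act_deriv : ∀ (g : L) (a b : A), act g (a * b) = act g a * b + a * act g b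
  act_bracket : ∀ (g h : L) (a : A), act ⁅g, h⁆ a = act g (act h a) - act h (act g a)
  act_smul_bracket : ∀ (g : L) (a : A) (h : L), ⁅g, a • h⁆ = act g a • h + a • ⁅g, h⁆

namespace SoupAct

variable {k A L : Type} [Field k] [CharZero k] [CommRing A] [Algebra k A]
  [LieRing L] [LieAlgebra k L] [Module A L] [IsScalarTower k A L]

/-- The Lie bracket of the semidirect sum Lie algebra `s = g ⊕ a` (`a` abelian):
`[(g,a), (h,b)] = ([g,h], g·b − h·a)`. -/
def sBracket (σ : SoupAct k A L) (p q : L × A) : L × A :=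
  (⁅p.1, q.1⁆, σ.act p.1 q.2 - σ.act q.1 p.2)

end SoupAct

/-- Left multiplication by `a ∈ a` on `s = g ⊕ a`. -/
def aMul {A L : Type} [Mul A] [SMul A L] (c : A) (p : L × A) : L × A :=
  (c • p.1, c * p.2)

/-- The distinguished vector `1 = (0, 1)` of `s`. -/
def sOne (A L : Type) [CommRing A] [LieRing L] : L × A := ((0 : L), (1 : A))

variable (k : Type) [Field k] [CharZero k] (A : Type) [CommRing A] [Algebra k A]
  (L : Type) [LieRing L] [LieAlgebra k L] [Module A L] [IsScalarTower k A L]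

/-- The additional generators of the souped-up vertex algebra ideal:
`s⟦s,t⟧ := s₀t − [s,t]`, `a⟦a,s⟧ := a₋₁s − a·s`, and
`am⟦a,b,x⟧ := (ab)₋₁x − a₋₁(b₋₁x)` (the latter being linear in `x`, it is imposed for
all `x ∈ F(s)`, equivalently for all monomials). -/
def soupGens (σ : SoupAct k A L) : Set (FV k (L × A)) :=
  {w | ∃ p q : L × A,
      w = op k (L × A) 0 (ι k (L × A) p) (ι k (L × A) q) - ι k (L × A) (σ.sBracket p q)} ∪
  {w | ∃ (c : A) (p : L × A),
      w = op k (L × A) (-1) (ι k (L × A) ((0 : L), c)) (ι k (L × A) p)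
            - ι k (L × A) (aMul c p)} ∪
  {w | ∃ (c d : A) (x : FV k (L × A)),
      w = op k (L × A) (-1) (ι k (L × A) ((0 : L), c * d)) x
            - op k (L × A) (-1) (ι k (L × A) ((0 : L), c))
                (op k (L × A) (-1) (ι k (L × A) ((0 : L), d)) x)}

/-- The full generating set of the souped-up vertex algebra ideal `I(s)`. -/
def soupGensAll (σ : SoupAct k A L) (N : (L × A) → (L × A) → ℕ) : Set (FV k (L × A)) :=
  (freeIFA k (L × A) (sOne A L)).baseGens ∪
    {w | ∃ (p q : L × A) (n : ℤ), (N p q : ℤ) ≤ n ∧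
        w = op k (L × A) n (ι k (L × A) p) (ι k (L × A) q)} ∪
    soupGens k A L σ

/-- The souped-up vertex algebra ideal `I(s)` associated to the locality function
`N : s × s → ℕ`. -/
def soupIdeal (σ : SoupAct k A L) (N : (L × A) → (L × A) → ℕ) :
    Submodule k (FV k (L × A)) :=
  (freeIFA k (L × A) (sOne A L)).idealGenBy (soupGensAll k A L σ N)


/-!
Quasi-commutativity expresses `y₋₁x` as `x₋₁y` plus a series `Σ_{K≥1} ± D^K(x_{K-1}y)/K!`.
If `x₋₁y ≡ y₋₁x` modulo `J`, that series lies in `J`; multiplying it on the right by `∘₁ z`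
and using translation covariance `(Dw)ₙz = -n·w_{n-1}z` kills every term with `K ≥ 2` and
turns the `K = 1` term into `-(x₀y)₀z`, so `(x₀y)₀z ∈ J`.  For `x = a`, `y = z = g` the
relation `g₋₁a = a·g = a₋₁g` gives this commutativity, while `s₀t ≡ [s,t]` identifies
`(a₀g)₀g` with `[[a,g],g] = [g,[g,a]] = 1`.  Hence `1 ∈ J`, and then `x = 1₋₁x - i⟦x;-1⟧ ∈ J`
for every `x`.
-/

namespace Shape

def size : Shape → ℕ
  | leaf => 0
  | node _ l r => l.size + r.size + 1

end Shape

section FreeAlgebra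

variable {k : Type} [Field k] {V : Type} [AddCommGroup V] [Module k V]

instance (s : Shape) : DiscreteTopology (MonSp k V s) := ⟨rfl⟩

lemma op_node (n m : ℤ) (x y : FV k V) (l r : Shape) :
    op k V n x y (.node m l r) = if n = m then x l ⊗ₜ[k] y r else 0 := rfl

lemma op_apply_eq_zero_of_size_lt {m : ℕ} {x : FV k V} (hx : ∀ t : Shape, t.size < m → x t = 0)
    (n : ℤ) (y : FV k V) {s : Shape} (hs : s.size < m + 1) : op k V n x y s = 0 := by
  cases s with
  | leaf => rfl
  | node p l r =>
    have hl : l.size < m := by simp only [Shape.size] at hs; omega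
    rw [op_node, hx l hl, TensorProduct.zero_tmul, ite_self]
    rfl

variable [CharZero k]

lemma freeIFA_circ (e : V) : (freeIFA k V e).circ = op k V := rfl

def opRight (n : ℤ) (y : FV k V) : FV k V →ₗ[k] FV k V where
  toFun x := op k V n x y
  map_add' x x' := (freeIFA k V 0).circ_add_left n x x' y
  map_smul' c x := (freeIFA k V 0).circ_smul_left n c x y

@[simp]
lemma opRight_apply (n : ℤ) (x y : FV k V) : opRight n y x = op k V n x y := rfl

lemma continuous_opRight (n : ℤ) (y : FV k V) : Continuous (opRight n y) := by
  refine continuous_pi fun s => ?_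
  cases s with
  | leaf => exact continuous_const
  | node m l r =>
    exact (continuous_of_discreteTopology (f := fun v : MonSp k V l =>
      (if n = m then v ⊗ₜ[k] y r else 0 : MonSp k V (.node m l r)))).comp (continuous_apply l)

lemma iterate_D_op_apply_eq_zero (e : V) (n : ℤ) (x y : FV k V) (K : ℕ) {s : Shape}
    (hs : s.size < K + 1) : ((freeIFA k V e).D)^[K] (op k V n x y) s = 0 := by
  induction K generalizing s with
  | zero => exact op_apply_eq_zero_of_size_lt (by omega) n y hs
  | succ K ih =>
    rw [Function.iterate_succ_apply']
    exact op_apply_eq_zero_of_size_lt (fun t ht => ih ht) _ _ hs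

lemma summable_smul_iterate_D_op (e : V) (c : ℕ → k) (n : ℕ → ℤ) (x y : FV k V) :
    Summable fun K => c K • ((freeIFA k V e).D)^[K] (op k V (n K) x y) :=
  Pi.summable.2 fun s => summable_of_ne_finset_zero (s := Finset.range s.size) fun K hK => by
    rw [Finset.mem_range, not_lt] at hK
    rw [Pi.smul_apply, iterate_D_op_apply_eq_zero e _ x y K (by omega), smul_zero]

end FreeAlgebra

namespace IFA

variable {k F : Type} [Field k] [CharZero k] [AddCommGroup F] [Module k F]
  [TopologicalSpace F] (A : IFA k F)

lemma geni_mem_baseGens (x : F) : A.geni x (-1) ∈ A.baseGens :=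
  Or.inl (Or.inl (Or.inl (Or.inl ⟨x, -1, le_rfl, rfl⟩)))

lemma genqc_mem_baseGens (x y : F) {n : ℤ} (hn : -1 ≤ n) : A.genqc x y n ∈ A.baseGens :=
  Or.inl (Or.inl (Or.inr ⟨x, y, n, hn, rfl⟩))

lemma gene_mem_baseGens (x y : F) (n : ℤ) : A.gene x y n ∈ A.baseGens :=
  Or.inr ⟨x, y, n, rfl⟩

lemma gene_zero (x y : F) : A.gene x y 0 = A.circ 0 (A.D x) y := by
  simp [gene]

lemma gene_one (x y : F) : A.gene x y 1 = A.circ 1 (A.D x) y + A.circ 0 x y := by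
  simp [gene]

lemma circ_one_iterate_D_mem {J : Submodule k F} (hJ : A.baseGens ⊆ J) (K : ℕ) (x y : F) :
    A.circ 1 (A.D^[K + 2] x) y ∈ J := by
  have h := sub_mem (hJ (A.gene_mem_baseGens (A.D^[K + 1] x) y 1))
    (hJ (A.gene_mem_baseGens (A.D^[K] x) y 0))
  rwa [gene_one, gene_zero, ← Function.iterate_succ_apply' A.D,
    ← Function.iterate_succ_apply' A.D, add_sub_cancel_right] at h

lemma isIdeal_idealGenBy (S : Set F) : A.IsIdeal (A.idealGenBy S) := by
  refine ⟨fun n x y hy => ?_, fun f hf hsum => ?_⟩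
  · simp only [idealGenBy, Submodule.mem_sInf] at hy ⊢
    exact ⟨fun J hJ => (hJ.1.1 n x y (hy J hJ)).1, fun J hJ => (hJ.1.1 n x y (hy J hJ)).2⟩
  · simp only [idealGenBy, Submodule.mem_sInf] at hf ⊢
    exact fun J hJ => hJ.1.2 f (fun i => hf i J hJ) hsum

lemma subset_idealGenBy (S : Set F) : S ⊆ A.idealGenBy S := fun _ hx => by
  simp only [SetLike.mem_coe, idealGenBy, Submodule.mem_sInf]
  exact fun J hJ => hJ.2 hx

lemma eq_top_of_one_mem {J : Submodule k F} (hJ : A.IsIdeal J)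
    (hi : ∀ x, A.geni x (-1) ∈ J) (h1 : A.one ∈ J) : J = ⊤ := by
  refine eq_top_iff.2 fun x _ => ?_
  have hx : x = A.circ (-1) A.one x - A.geni x (-1) := by simp [geni]
  rw [hx]
  exact sub_mem (hJ.1 (-1) x _ h1).2 (hi x)

lemma idealGenBy_eq_top_of_one_mem {S : Set F} (hS : A.baseGens ⊆ S)
    (h1 : A.one ∈ A.idealGenBy S) : A.idealGenBy S = ⊤ :=
  A.eq_top_of_one_mem (A.isIdeal_idealGenBy S)
    (fun x => A.subset_idealGenBy S (hS (A.geni_mem_baseGens x))) h1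

end IFA

section QuasiCommutativity

variable {k : Type} [Field k] [CharZero k] {V : Type} [AddCommGroup V] [Module k V]

theorem op_zero_op_zero_mem_of_op_neg_one_sub_mem (e : V) {J : Submodule k (FV k V)}
    (hJ : (freeIFA k V e).IsIdeal J) (hbase : (freeIFA k V e).baseGens ⊆ J) {x y : FV k V}
    (hxy : op k V (-1) y x - op k V (-1) x y ∈ J) (z : FV k V) :
    op k V 0 (op k V 0 x y) z ∈ J := by
  set E := freeIFA k V e
  set f : ℕ → FV k V := fun K =>
    ((-1 : k) ^ ((-1 : ℤ) + (K : ℤ)) * (K.factorial : k)⁻¹) • E.D^[K] (op k V (-1 + K) x y)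
    with hf_def
  have hf : Summable f := summable_smul_iterate_D_op e _ _ x y
  have hfz : Summable fun K => opRight 1 z (f K) := hf.map _ (continuous_opRight 1 z)
  have hf0 : f 0 = -op k V (-1) x y := by simp [hf_def]
  have hf1 : f 1 = E.D (op k V 0 x y) := by simp [hf_def]
  have hW : op k V (-1) x y + ∑' K, f K ∈ J := by
    have h := sub_mem (hbase (E.genqc_mem_baseGens y x le_rfl)) hxy
    have hqc : E.genqc y x (-1) = op k V (-1) y x + ∑' K, f K := rfl
    rwa [hqc, add_sub_sub_cancel, add_comm] at h
  have hWz : opRight 1 z (op k V (-1) x y + ∑' K, f K) ∈ J := (hJ.1 1 z _ hW).2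
  have htail : ∑' K, opRight 1 z (f (K + 2)) ∈ J := by
    refine hJ.2 _ (fun K => ?_) ((summable_nat_add_iff 2).2 hfz)
    rw [hf_def, map_smul]
    exact J.smul_mem _ (E.circ_one_iterate_D_mem hbase K _ z)
  have hsplit : opRight 1 z (op k V (-1) x y + ∑' K, f K)
      = E.gene (op k V 0 x y) z 1 - op k V 0 (op k V 0 x y) z
        + ∑' K, opRight 1 z (f (K + 2)) := by
    rw [map_add, hf.map_tsum _ (continuous_opRight 1 z), ← hfz.sum_add_tsum_nat_add 2]
    simp only [Finset.sum_range_succ, Finset.sum_range_zero, hf0, hf1, map_neg, E.gene_one]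
    simp only [opRight_apply, E, freeIFA_circ]
    abel
  have hX : op k V 0 (op k V 0 x y) z = E.gene (op k V 0 x y) z 1
      + ∑' K, opRight 1 z (f (K + 2)) - opRight 1 z (op k V (-1) x y + ∑' K, f K) := by
    rw [hsplit]
    abel
  rw [hX]
  exact sub_mem (add_mem (hbase (E.gene_mem_baseGens _ z 1)) htail) hWz

end QuasiCommutativity

section SoupedUp

variable {k A L : Type} [Field k] [CharZero k] [CommRing A] [Algebra k A]
  [LieRing L] [LieAlgebra k L] [Module A L] [IsScalarTower k A L] (σ : SoupAct k A L)

lemma SoupAct.sBracket_sBracket_mk_zero (a : A) (g : L) :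
    σ.sBracket (σ.sBracket (0, a) (g, 0)) (g, 0) = (0, σ.act g (σ.act g a)) := by
  simp [SoupAct.sBracket]

lemma op_zero_op_zero_iota_sub_mem {J : Submodule k (FV k (L × A))}
    (hJ : (freeIFA k (L × A) (sOne A L)).IsIdeal J) (hs : soupGens k A L σ ⊆ J)
    (p q r : L × A) :
    op k (L × A) 0 (op k (L × A) 0 (ι k (L × A) p) (ι k (L × A) q)) (ι k (L × A) r)
      - ι k (L × A) (σ.sBracket (σ.sBracket p q) r) ∈ J := by
  have hpq : op k (L × A) 0 (ι k (L × A) p) (ι k (L × A) q) - ι k (L × A) (σ.sBracket p q) ∈ J :=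
    hs (Or.inl (Or.inl ⟨p, q, rfl⟩))
  have hpqr : op k (L × A) 0 (ι k (L × A) (σ.sBracket p q)) (ι k (L × A) r)
      - ι k (L × A) (σ.sBracket (σ.sBracket p q) r) ∈ J :=
    hs (Or.inl (Or.inl ⟨σ.sBracket p q, r, rfl⟩))
  have h := add_mem (hJ.1 0 (ι k (L × A) r) _ hpq).2 hpqr
  rwa [freeIFA_circ, ← opRight_apply, map_sub, opRight_apply, opRight_apply,
    sub_add_sub_cancel] at h

theorem iota_sOne_mem_of_op_neg_one_sub_mem {J : Submodule k (FV k (L × A))}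
    (hJ : (freeIFA k (L × A) (sOne A L)).IsIdeal J)
    (hbase : (freeIFA k (L × A) (sOne A L)).baseGens ⊆ J) (hs : soupGens k A L σ ⊆ J)
    {a : A} {g : L} (hga : σ.act g (σ.act g a) = 1)
    (hrel : op k (L × A) (-1) (ι k (L × A) (g, (0 : A))) (ι k (L × A) ((0 : L), a))
      - ι k (L × A) (a • g, (0 : A)) ∈ J) :
    ι k (L × A) (sOne A L) ∈ J := by
  have hleft : op k (L × A) (-1) (ι k (L × A) ((0 : L), a)) (ι k (L × A) (g, (0 : A)))
      - ι k (L × A) (a • g, (0 : A)) ∈ J := by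
    simpa [aMul] using hs (Or.inl (Or.inr ⟨a, (g, 0), rfl⟩))
  have hcomm := sub_mem hrel hleft
  rw [sub_sub_sub_cancel_right] at hcomm
  have hzero := op_zero_op_zero_mem_of_op_neg_one_sub_mem _ hJ hbase hcomm (ι k (L × A) (g, 0))
  have hbracket := op_zero_op_zero_iota_sub_mem σ hJ hs (0, a) (g, 0) (g, 0)
  rw [σ.sBracket_sBracket_mk_zero, hga] at hbracket
  simpa [sOne] using sub_mem hzero hbracket

end SoupedUp

theorem statement12_general (k : Type) [Field k] [CharZero k] (A : Type) [CommRing A]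
    [Algebra k A] (L : Type) [LieRing L] [LieAlgebra k L] [Module A L]
    [IsScalarTower k A L] (σ : SoupAct k A L) (N : (L × A) → (L × A) → ℕ)
    (a : A) (g : L) (hga : σ.act g (σ.act g a) = 1) :
    ι k (L × A) (sOne A L) ∈
        (freeIFA k (L × A) (sOne A L)).idealGenBy
          (soupGensAll k A L σ N ∪
            {op k (L × A) (-1) (ι k (L × A) (g, (0 : A))) (ι k (L × A) ((0 : L), a))
              - ι k (L × A) (a • g, (0 : A))}) ∧
      (freeIFA k (L × A) (sOne A L)).idealGenBy
          (soupGensAll k A L σ N ∪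
            {op k (L × A) (-1) (ι k (L × A) (g, (0 : A))) (ι k (L × A) ((0 : L), a))
              - ι k (L × A) (a • g, (0 : A))}) = ⊤ := by
  set E := freeIFA k (L × A) (sOne A L)
  set S := soupGensAll k A L σ N ∪
    {op k (L × A) (-1) (ι k (L × A) (g, (0 : A))) (ι k (L × A) ((0 : L), a))
      - ι k (L × A) (a • g, (0 : A))}
  have hbase : E.baseGens ⊆ S := fun _ hw => Or.inl (Or.inl (Or.inl hw))
  have hone : ι k (L × A) (sOne A L) ∈ E.idealGenBy S :=
    iota_sOne_mem_of_op_neg_one_sub_mem σ (E.isIdeal_idealGenBy S)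
      (hbase.trans (E.subset_idealGenBy S))
      (fun _ hw => E.subset_idealGenBy S (Or.inl (Or.inr hw))) hga
      (E.subset_idealGenBy S (Or.inr rfl))
  exact ⟨hone, E.idealGenBy_eq_top_of_one_mem hbase hone⟩

/-- **obstruction to right `a`-multiplication.** Let `s = s(g,a)` be a
souped-up Lie algebra containing `a ∈ a`, `g ∈ g` with `[g,[g,a]] = 1`.  For any
locality function `N`, the ideal `J` generated by the souped-up vertex algebra ideal
`I(s)` together with the single element `g ∘₋₁ a − a·g` contains `1`; consequently
`J = F(s)` and the quotient `F(s)/J` is zero. -/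
theorem statement12 (k : Type) [Field k] [CharZero k] (A : Type) [CommRing A]
    [Algebra k A] [Nontrivial A] (L : Type) [LieRing L] [LieAlgebra k L] [Module A L]
    [IsScalarTower k A L] (σ : SoupAct k A L) (N : (L × A) → (L × A) → ℕ)
    (a : A) (g : L) (hga : σ.act g (σ.act g a) = 1) :
    ι k (L × A) (sOne A L) ∈
        (freeIFA k (L × A) (sOne A L)).idealGenBy
          (soupGensAll k A L σ N ∪
            {op k (L × A) (-1) (ι k (L × A) (g, (0 : A))) (ι k (L × A) ((0 : L), a))
              - ι k (L × A) (a • g, (0 : A))}) ∧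
      (freeIFA k (L × A) (sOne A L)).idealGenBy
          (soupGensAll k A L σ N ∪
            {op k (L × A) (-1) (ι k (L × A) (g, (0 : A))) (ι k (L × A) ((0 : L), a))
              - ι k (L × A) (a • g, (0 : A))}) = ⊤ :=
  statement12_general k A L σ N a g hga
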